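/- Let T be a localisable monad on a symmetric monoidal category C and let u ≤ v be central idempotents with u = v ∘ m. Then the restriction functor C|_{u≤v} : C|v → C|u together with the natural transformation φ_A = T(A) ⊗ u : T(A) ⊗ U → T(A) (a morphism T|u(C|_{u≤v} A) → C|_{u≤v}(T|v A) in C|u) is a lax monad morphism from T|v to T|u, i.e. φ is natural and compatible with the units and multiplications of T|v and T|u. -/

import Mathlib

open CategoryTheory MonoidalCategory

variable {C : Type*} [Category C] [MonoidalCategory C]

/-- The multiplication map `U ⊗ U ⟶ U` associated to a candidate central idempotent
`u : U ⟶ I`; `u` is a central idempotent when this map agrees with `λ_U ∘ (u ▷ U)` and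
is invertible. -/
abbrev ciMap {U : C} (u : U ⟶ 𝟙_ C) : U ⊗ U ⟶ U :=
  U ◁ u ≫ (ρ_ U).hom

/-- The identity morphism on `A` in the restricted category `C|u`: the morphism
`A ⊗ u : A ⊗ U ⟶ A` (composed with the right unitor). -/
def restrictId {U : C} (u : U ⟶ 𝟙_ C) (A : C) : A ⊗ U ⟶ A :=
  A ◁ u ≫ (ρ_ A).hom

/-- Composition in the restricted category `C|u`: given `f : A ⊗ U ⟶ B` and
`g : B ⊗ U ⟶ D`, their composite is `g ∘ (f ⊗ U) ∘ (A ⊗ (U ⊗ u))⁻¹`. -/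
noncomputable def restrictComp {U : C} (u : U ⟶ 𝟙_ C) [IsIso (ciMap u)] {A B D : C}
    (f : A ⊗ U ⟶ B) (g : B ⊗ U ⟶ D) : A ⊗ U ⟶ D :=
  A ◁ inv (ciMap u) ≫ (α_ A U U).inv ≫ f ▷ U ≫ g

/-- A central idempotent in a monoidal category. -/
def IsCentralIdempotent {U : C} (u : U ⟶ 𝟙_ C) : Prop :=
  (U ◁ u ≫ (ρ_ U).hom = u ▷ U ≫ (λ_ U).hom) ∧ IsIso (U ◁ u ≫ (ρ_ U).hom)

variable (T : Monad C)

/-- The action on morphisms of the restricted monad `T|u` on `C|u`: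
a morphism `f : A ⊗ U ⟶ B` of `C|u` is sent to `T(f) ∘ str_{A,U}`. -/
def TuMap (str : ∀ (A : C) {U' : C}, (U' ⟶ 𝟙_ C) → (T.obj A ⊗ U' ⟶ T.obj (A ⊗ U')))
    {U : C} (u : U ⟶ 𝟙_ C) {A B : C} (f : A ⊗ U ⟶ B) : T.obj A ⊗ U ⟶ T.obj B :=
  str A u ≫ T.map f

/-- The unit of the restricted monad `T|u`: the morphism `η_A ⊗ u`. -/
def etaU {U : C} (u : U ⟶ 𝟙_ C) (A : C) : A ⊗ U ⟶ T.obj A :=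
  (T.η.app A ⊗ₘ u) ≫ (ρ_ (T.obj A)).hom

/-- The multiplication of the restricted monad `T|u`: the morphism `μ_A ⊗ u`. -/
def muU {U : C} (u : U ⟶ 𝟙_ C) (A : C) : T.obj (T.obj A) ⊗ U ⟶ T.obj A :=
  (T.μ.app A ⊗ₘ u) ≫ (ρ_ (T.obj A)).hom

/-!
In `C|u` the morphism `restrictId u A` is the identity of `A`, so `φ` is an identity and the
three laws say that restriction along `m` commutes with the restricted monads: on morphisms this
is the strength axiom for `u = v ∘ m`; units and multiplications of `T|u` are the restrictions of
those of `T|v` because `u` factors through `m`; and `T|u` preserves identities by the unit axiom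
of the strength together with the strength axiom for `u ≤ 1`.
-/

section RestrictedCategory

variable {U : C} (u : U ⟶ 𝟙_ C)

lemma whiskerLeft_ciMap (A : C) :
    A ◁ ciMap u = (α_ A U U).inv ≫ restrictId u (A ⊗ U) := by
  rw [restrictId, ← associator_inv_naturality_right_assoc]
  simp only [ciMap, MonoidalCategory.whiskerLeft_comp]
  congr 1
  monoidal

lemma restrictId_naturality {X Y : C} (f : X ⟶ Y) :
    f ▷ U ≫ restrictId u Y = restrictId u X ≫ f := by
  rw [restrictId, restrictId, ← whisker_exchange_assoc, rightUnitor_naturality, Category.assoc]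

lemma whiskerLeft_ciMap_of_central (hcu : U ◁ u ≫ (ρ_ U).hom = u ▷ U ≫ (λ_ U).hom) (A : C) :
    A ◁ ciMap u = (α_ A U U).inv ≫ restrictId u A ▷ U := by
  rw [ciMap, hcu, restrictId]
  simp only [MonoidalCategory.comp_whiskerRight, MonoidalCategory.whiskerLeft_comp]
  rw [← associator_inv_naturality_middle_assoc]
  congr 1
  monoidal

variable [IsIso (ciMap u)]

lemma restrictComp_restrictId {A X : C} (f : A ⊗ U ⟶ X) :
    restrictComp u f (restrictId u X) = f := by
  rw [restrictComp, restrictId_naturality, reassoc_of% (whiskerLeft_ciMap u A).symm,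
    ← MonoidalCategory.whiskerLeft_comp_assoc, IsIso.inv_hom_id,
    MonoidalCategory.whiskerLeft_id, Category.id_comp]

lemma restrictId_restrictComp (hcu : U ◁ u ≫ (ρ_ U).hom = u ▷ U ≫ (λ_ U).hom) {A X : C}
    (g : A ⊗ U ⟶ X) : restrictComp u (restrictId u A) g = g := by
  rw [restrictComp, reassoc_of% (whiskerLeft_ciMap_of_central u hcu A).symm,
    ← MonoidalCategory.whiskerLeft_comp_assoc, IsIso.inv_hom_id,
    MonoidalCategory.whiskerLeft_id, Category.id_comp]

end RestrictedCategory

lemma isCentralIdempotent_id_unit : IsCentralIdempotent (𝟙 (𝟙_ C)) := by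
  refine ⟨by simp [unitors_equal], ?_⟩
  simp only [MonoidalCategory.whiskerLeft_id, Category.id_comp]
  infer_instance

section RestrictedMonad

variable {U V : C} {u : U ⟶ 𝟙_ C} {v : V ⟶ 𝟙_ C} {m : U ⟶ V}

lemma etaU_eq_whiskerLeft_comp (hm : u = m ≫ v) (A : C) :
    etaU T u A = A ◁ m ≫ etaU T v A := by
  simp only [etaU, hm, MonoidalCategory.tensorHom_def, MonoidalCategory.whiskerLeft_comp,
    Category.assoc, whisker_exchange_assoc]

lemma muU_eq_whiskerLeft_comp (hm : u = m ≫ v) (A : C) :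
    muU T u A = T.obj (T.obj A) ◁ m ≫ muU T v A := by
  simp only [muU, hm, MonoidalCategory.tensorHom_def, MonoidalCategory.whiskerLeft_comp,
    Category.assoc, whisker_exchange_assoc]

variable {str : ∀ (A : C) {U' : C}, (U' ⟶ 𝟙_ C) → (T.obj A ⊗ U' ⟶ T.obj (A ⊗ U'))}

lemma TuMap_whiskerLeft_comp {A B : C} (hstr : T.obj A ◁ m ≫ str A v = str A u ≫ T.map (A ◁ m))
    (f : A ⊗ V ⟶ B) : TuMap T str u (A ◁ m ≫ f) = T.obj A ◁ m ≫ TuMap T str v f := by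
  rw [TuMap, TuMap, Functor.map_comp, reassoc_of% hstr]

lemma TuMap_restrictId {X : C}
    (hunit : str X (𝟙 (𝟙_ C)) ≫ T.map (ρ_ X).hom = (ρ_ (T.obj X)).hom)
    (hstr : T.obj X ◁ u ≫ str X (𝟙 (𝟙_ C)) = str X u ≫ T.map (X ◁ u)) :
    TuMap T str u (restrictId u X) = restrictId u (T.obj X) := by
  rw [TuMap, restrictId, Functor.map_comp, ← reassoc_of% hstr, hunit, restrictId]

end RestrictedMonad

theorem restrict_lax_monad_morphism_general {C : Type*} [Category C] [MonoidalCategory C] (T : Monad C)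
    (str : ∀ (A : C) {U' : C}, (U' ⟶ 𝟙_ C) → (T.obj A ⊗ U' ⟶ T.obj (A ⊗ U')))
    -- axioms of a localisable monad
    (h1 : ∀ A : C, str A (𝟙 (𝟙_ C)) ≫ T.map (ρ_ A).hom = (ρ_ (T.obj A)).hom)
    (h5 : ∀ {U' V' : C} (u' : U' ⟶ 𝟙_ C) (v' : V' ⟶ 𝟙_ C) (m : U' ⟶ V'),
      IsCentralIdempotent u' → IsCentralIdempotent v' → u' = m ≫ v' → ∀ A : C,
      T.obj A ◁ m ≫ str A v' = str A u' ≫ T.map (A ◁ m))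
    -- central idempotents u ≤ v with u = v ∘ m
    {U V : C} (u : U ⟶ 𝟙_ C) (v : V ⟶ 𝟙_ C) (m : U ⟶ V) (hm : u = m ≫ v)
    (hcu : U ◁ u ≫ (ρ_ U).hom = u ▷ U ≫ (λ_ U).hom) [IsIso (ciMap u)]
    (hcv : V ◁ v ≫ (ρ_ V).hom = v ▷ V ≫ (λ_ V).hom) [IsIso (ciMap v)] :
    -- φ is natural: for every morphism f : A ⟶ B of C|v
    (∀ {A B : C} (f : A ⊗ V ⟶ B),
      restrictComp u (TuMap T str u (A ◁ m ≫ f)) (restrictId u (T.obj B)) =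
        restrictComp u (restrictId u (T.obj A)) (T.obj A ◁ m ≫ TuMap T str v f)) ∧
    -- compatibility with the units
    (∀ A : C, restrictComp u (etaU T u A) (restrictId u (T.obj A)) = A ◁ m ≫ etaU T v A) ∧
    -- compatibility with the multiplications
    (∀ A : C, restrictComp u (muU T u A) (restrictId u (T.obj A)) =
      restrictComp u
        (restrictComp u (TuMap T str u (restrictId u (T.obj A))) (restrictId u (T.obj (T.obj A))))
        (T.obj (T.obj A) ◁ m ≫ muU T v A)) := by
  have hu : IsCentralIdempotent u := ⟨hcu, inferInstance⟩
  have hv : IsCentralIdempotent v := ⟨hcv, inferInstance⟩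
  refine ⟨fun {A B} f => ?_, fun A => ?_, fun A => ?_⟩
  · rw [restrictComp_restrictId, restrictId_restrictComp u hcu,
      TuMap_whiskerLeft_comp T (h5 u v m hu hv hm A)]
  · rw [restrictComp_restrictId, etaU_eq_whiskerLeft_comp T hm]
  · have hu_le_unit := h5 u (𝟙 (𝟙_ C)) u hu isCentralIdempotent_id_unit (Category.comp_id u).symm
    rw [restrictComp_restrictId, restrictComp_restrictId,
      TuMap_restrictId T (h1 _) (hu_le_unit _), restrictId_restrictComp u hcu,
      muU_eq_whiskerLeft_comp T hm]

/-- Let `T` be a localisable monad on a symmetric monoidal category `C` and `u ≤ v`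
central idempotents with `u = v ∘ m`. Then the restriction functor `C|_{u≤v} : C|v ⥤ C|u`
(identity on objects, `f ↦ f ∘ (A ⊗ m)` on morphisms), together with
`φ_A = T(A) ⊗ u : T(A) ⊗ U ⟶ T(A)`, is a lax monad morphism `T|v ⟶ T|u`:
`φ` is natural and compatible with the units and multiplications. -/
theorem restrict_lax_monad_morphism {C : Type*} [Category C] [MonoidalCategory C]
    [SymmetricCategory C] (T : Monad C)
    (str : ∀ (A : C) {U' : C}, (U' ⟶ 𝟙_ C) → (T.obj A ⊗ U' ⟶ T.obj (A ⊗ U')))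
    -- axioms of a localisable monad
    (h1 : ∀ A : C, str A (𝟙 (𝟙_ C)) ≫ T.map (ρ_ A).hom = (ρ_ (T.obj A)).hom)
    (h2 : ∀ {U' V' : C} (u' : U' ⟶ 𝟙_ C) (v' : V' ⟶ 𝟙_ C), IsCentralIdempotent u' →
      IsCentralIdempotent v' → ∀ A : C,
      str A ((u' ⊗ₘ v') ≫ (λ_ (𝟙_ C)).hom) ≫ T.map (α_ A U' V').inv =
        (α_ (T.obj A) U' V').inv ≫ str A u' ▷ V' ≫ str (A ⊗ U') v')
    (h3 : ∀ {U' : C} (u' : U' ⟶ 𝟙_ C), IsCentralIdempotent u' → ∀ A : C,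
      T.η.app (A ⊗ U') = T.η.app A ▷ U' ≫ str A u')
    (h4 : ∀ {U' : C} (u' : U' ⟶ 𝟙_ C), IsCentralIdempotent u' → ∀ A : C,
      str (T.obj A) u' ≫ T.map (str A u') ≫ T.μ.app (A ⊗ U') = T.μ.app A ▷ U' ≫ str A u')
    (h5 : ∀ {U' V' : C} (u' : U' ⟶ 𝟙_ C) (v' : V' ⟶ 𝟙_ C) (m : U' ⟶ V'),
      IsCentralIdempotent u' → IsCentralIdempotent v' → u' = m ≫ v' → ∀ A : C,
      T.obj A ◁ m ≫ str A v' = str A u' ≫ T.map (A ◁ m))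
    (h6 : ∀ {U' : C} (u' : U' ⟶ 𝟙_ C), IsCentralIdempotent u' → ∀ {A B : C} (f : A ⟶ B),
      T.map f ▷ U' ≫ str B u' = str A u' ≫ T.map (f ▷ U'))
    -- central idempotents u ≤ v with u = v ∘ m
    {U V : C} (u : U ⟶ 𝟙_ C) (v : V ⟶ 𝟙_ C) (m : U ⟶ V) (hm : u = m ≫ v)
    (hcu : U ◁ u ≫ (ρ_ U).hom = u ▷ U ≫ (λ_ U).hom) [IsIso (ciMap u)]
    (hcv : V ◁ v ≫ (ρ_ V).hom = v ▷ V ≫ (λ_ V).hom) [IsIso (ciMap v)] :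
    -- φ is natural: for every morphism f : A ⟶ B of C|v
    (∀ {A B : C} (f : A ⊗ V ⟶ B),
      restrictComp u (TuMap T str u (A ◁ m ≫ f)) (restrictId u (T.obj B)) =
        restrictComp u (restrictId u (T.obj A)) (T.obj A ◁ m ≫ TuMap T str v f)) ∧
    -- compatibility with the units
    (∀ A : C, restrictComp u (etaU T u A) (restrictId u (T.obj A)) = A ◁ m ≫ etaU T v A) ∧
    -- compatibility with the multiplications
    (∀ A : C, restrictComp u (muU T u A) (restrictId u (T.obj A)) =
      restrictComp u
        (restrictComp u (TuMap T str u (restrictId u (T.obj A))) (restrictId u (T.obj (T.obj A))))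
        (T.obj (T.obj A) ◁ m ≫ muU T v A)) :=
  restrict_lax_monad_morphism_general T str h1 h5 u v m hm hcu hcv
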